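/- arXiv:1910.02151 — 5 statements merged into one kernel-verified Lean document; each statement's English description precedes it below -/
import Mathlib

section
/- Every attractor Γ of a string S of length n satisfies d_k(S) ≤ k·|Γ| for every k ∈ {1,...,n}; consequently, every string S satisfies δ(S) ≤ γ(S). -/
/-
Each length-`k` substring has an occurrence through some attractor position `p`, and such an
occurrence is determined by `p` together with the offset of `p` inside it, one of `k` values.
Hence `d_k(S) ≤ k·|Γ|`, and dividing by `k` and applying this to a minimum attractor gives
`δ(S) ≤ γ(S)`.
-/

def substrings {α : Type} [DecidableEq α] (S : List α) (k : ℕ) : Finset (List α) :=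
  ((Finset.range (S.length + 1)).image (fun i => (S.drop i).take k)).filter
    (fun t => t.length = k)

def subCount {α : Type} [DecidableEq α] (S : List α) (k : ℕ) : ℕ :=
  (substrings S k).card

def delta {α : Type} [DecidableEq α] (S : List α) : ℚ :=
  if h : S = [] then 0
  else
    (Finset.Icc 1 S.length).sup'
      (Finset.nonempty_Icc.mpr (Nat.one_le_iff_ne_zero.mpr
        (fun h0 => h (List.length_eq_zero_iff.mp h0))))
      (fun k => (subCount S k : ℚ) / k)

def IsAttractor {α : Type} (S : List α) (Γ : Finset ℕ) : Prop :=
  (∀ p ∈ Γ, 1 ≤ p ∧ p ≤ S.length) ∧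
  ∀ i j : ℕ, 1 ≤ i → i ≤ j → j ≤ S.length →
    ∃ i' j' : ℕ, 1 ≤ i' ∧ i' ≤ j' ∧ j' ≤ S.length ∧
      (S.drop (i' - 1)).take (j' - i' + 1) = (S.drop (i - 1)).take (j - i + 1) ∧
      ∃ p ∈ Γ, i' ≤ p ∧ p ≤ j'

noncomputable def gamma {α : Type} (S : List α) : ℕ :=
  sInf { m | ∃ Γ : Finset ℕ, IsAttractor S Γ ∧ Γ.card = m }

section

variable {α : Type}

theorem mem_substrings [DecidableEq α] {S t : List α} {k : ℕ} :
    t ∈ substrings S k ↔ ∃ i, i + k ≤ S.length ∧ (S.drop i).take k = t := by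
  simp only [substrings, Finset.mem_filter, Finset.mem_image, Finset.mem_range]
  constructor
  · rintro ⟨⟨i, hi, rfl⟩, hlen⟩
    simp only [List.length_take, List.length_drop] at hlen
    exact ⟨i, by omega, rfl⟩
  · rintro ⟨i, hik, rfl⟩
    exact ⟨⟨i, by omega, rfl⟩, by simp only [List.length_take, List.length_drop]; omega⟩

theorem isAttractor_Icc (S : List α) : IsAttractor S (Finset.Icc 1 S.length) :=
  show _ ∧ _ from ⟨fun _ hp => Finset.mem_Icc.mp hp, fun i j hi hij hj =>
    ⟨i, j, hi, hij, hj, rfl, i, Finset.mem_Icc.mpr ⟨hi, hij.trans hj⟩, le_rfl, hij⟩⟩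

theorem exists_isAttractor_card_eq_gamma (S : List α) :
    ∃ Γ, IsAttractor S Γ ∧ Γ.card = gamma S :=
  Nat.sInf_mem (s := { m | ∃ Γ : Finset ℕ, IsAttractor S Γ ∧ Γ.card = m })
    ⟨_, _, isAttractor_Icc S, rfl⟩

namespace IsAttractor

variable {S : List α} {Γ : Finset ℕ}

/-- In 0-based indexing, a window starting at `p - 1 - o` covers the (1-based) position `p`
exactly when `o < k`. -/
theorem exists_occurrence_through (hΓ : IsAttractor S Γ) {i k : ℕ} (hk : 0 < k)
    (hik : i + k ≤ S.length) :
    ∃ p ∈ Γ, ∃ o < k, (S.drop (p - 1 - o)).take k = (S.drop i).take k := by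
  obtain ⟨i', j', hi', hij', hj', heq, p, hp, hpi, hpj⟩ :=
    hΓ.2 (i + 1) (i + k) (by omega) (by omega) hik
  have hwindow : (S.drop (i + 1 - 1)).take (i + k - (i + 1) + 1) = (S.drop i).take k := by
    congr 1; omega
  rw [hwindow] at heq
  have hlen : j' - i' + 1 = k := by
    have h := congrArg List.length heq
    simp only [List.length_take, List.length_drop] at h
    omega
  refine ⟨p, hp, p - i', by omega, ?_⟩
  rw [show p - 1 - (p - i') = i' - 1 by omega, ← heq, hlen]

theorem subCount_le_mul_card [DecidableEq α] (hΓ : IsAttractor S Γ) {k : ℕ} (hk : 0 < k) :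
    subCount S k ≤ k * Γ.card := by
  have hcover : substrings S k ⊆
      (Γ ×ˢ Finset.range k).image fun q => (S.drop (q.1 - 1 - q.2)).take k := by
    intro t ht
    obtain ⟨i, hik, rfl⟩ := mem_substrings.mp ht
    obtain ⟨p, hp, o, ho, heq⟩ := hΓ.exists_occurrence_through hk hik
    exact Finset.mem_image.mpr ⟨(p, o), Finset.mem_product.mpr ⟨hp, Finset.mem_range.mpr ho⟩, heq⟩
  calc subCount S k ≤ (Γ ×ˢ Finset.range k).card :=
        (Finset.card_le_card hcover).trans Finset.card_image_le
    _ = k * Γ.card := by rw [Finset.card_product, Finset.card_range, Nat.mul_comm]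

end IsAttractor

theorem delta_le_of_subCount_le [DecidableEq α] {S : List α} {m : ℕ}
    (h : ∀ k ∈ Finset.Icc 1 S.length, subCount S k ≤ k * m) : delta S ≤ m := by
  unfold delta
  split_ifs
  · exact Nat.cast_nonneg m
  · refine Finset.sup'_le _ _ fun k hk => ?_
    have hkpos : (0 : ℚ) < k := by exact_mod_cast (Finset.mem_Icc.mp hk).1
    rw [div_le_iff₀ hkpos, mul_comm]
    exact_mod_cast h k hk

end

/-- Every attractor `Γ` of a string `S` of length `n` satisfies `d_k(S) ≤ k·|Γ|`
for every `k ∈ {1,...,n}`; consequently, every string satisfies `δ(S) ≤ γ(S)`. -/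
theorem subCount_le_of_attractor_and_delta_le_gamma
    {α : Type} [DecidableEq α] (S : List α) :
    (∀ Γ : Finset ℕ, IsAttractor S Γ →
      ∀ k ∈ Finset.Icc 1 S.length, subCount S k ≤ k * Γ.card) ∧
    delta S ≤ (gamma S : ℚ) := by
  have hbound : ∀ Γ : Finset ℕ, IsAttractor S Γ →
      ∀ k ∈ Finset.Icc 1 S.length, subCount S k ≤ k * Γ.card :=
    fun Γ hΓ k hk => hΓ.subCount_le_mul_card (Finset.mem_Icc.mp hk).1
  obtain ⟨Γ, hΓ, hcard⟩ := exists_isAttractor_card_eq_gamma S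
  exact ⟨hbound, delta_le_of_subCount_le (hcard ▸ hbound Γ hΓ)⟩
end

section
/- There exists a constant c > 0 such that for every integer n ≥ 4 there exists a string S ∈ 𝒮^p_n with slp(S) ≥ c·(log₂ n)² / log₂ log₂ n. -/
/-- The terminal (if any) denoted by a grammar symbol, as a finset. -/
def symTerms {n : ℕ} {α : Type} [DecidableEq α] : (Fin n ⊕ α) → Finset α
  | Sum.inr a => {a}
  | Sum.inl _ => ∅

/-- A straight-line program over the alphabet `α`: every nonterminal `i` has exactly
one production `rhs i`, whose right-hand side consists of exactly two symbols
(terminals or nonterminals); acyclicity is enforced by requiring the nonterminals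
on the right-hand side of `i` to be smaller than `i` (a topological order). -/
structure SLP (α : Type) where
  num : ℕ
  rhs : Fin num → (Fin num ⊕ α) × (Fin num ⊕ α)
  start : Fin num ⊕ α
  wf : ∀ i j : Fin num, ((rhs i).1 = Sum.inl j → j < i) ∧ ((rhs i).2 = Sum.inl j → j < i)

/-- The string derived from nonterminal `i` of the SLP `G`. -/
def SLP.expand {α : Type} (G : SLP α) (i : Fin G.num) : List α :=
  (match h : (G.rhs i).1 with
   | Sum.inl j => G.expand j
   | Sum.inr a => [a]) ++
  (match h : (G.rhs i).2 with
   | Sum.inl j => G.expand j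
   | Sum.inr a => [a])
termination_by i.val
decreasing_by
  · exact (G.wf i j).1 h
  · exact (G.wf i j).2 h

/-- The string derived from a grammar symbol of the SLP `G`. -/
def SLP.expandSym {α : Type} (G : SLP α) : (Fin G.num ⊕ α) → List α
  | Sum.inl i => G.expand i
  | Sum.inr a => [a]

/-- `G` generates `S`: the start symbol of `G` derives exactly `S`. -/
def SLP.Generates {α : Type} (G : SLP α) (S : List α) : Prop :=
  G.expandSym G.start = S

/-- The terminals occurring in the SLP `G`. -/
def SLP.terminals {α : Type} [DecidableEq α] (G : SLP α) : Finset α :=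
  ((Finset.univ : Finset (Fin G.num)).biUnion fun i =>
    symTerms (G.rhs i).1 ∪ symTerms (G.rhs i).2) ∪ symTerms G.start

/-- The size of the SLP `G`: its total number of symbols (terminals plus nonterminals). -/
def SLP.size {α : Type} [DecidableEq α] (G : SLP α) : ℕ :=
  G.num + G.terminals.card

/-- `slp(S)`: the minimum total number of symbols over all SLPs generating `S`. -/
noncomputable def slp {α : Type} [DecidableEq α] (S : List α) : ℕ :=
  sInf { m | ∃ G : SLP α, G.Generates S ∧ G.size = m }

/-- `𝒮^p_n`: the family of length-`n` prefixes of infinite strings over `{a, b}`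
(`a = false`, `b = true`) in which the first `b` occurs at position 1 and, for each
`j ≥ 2`, the `j`-th `b` occurs at some position in `[2·4^(j-2)+1 .. 4^(j-1)]`
(all positions are 1-based; all other positions hold `a`). -/
def SPfamily (n : ℕ) : Set (List Bool) :=
  { S | S.length = n ∧ ∃ p : ℕ → ℕ, p 1 = 1 ∧
      (∀ j, 2 ≤ j → 2 * 4 ^ (j - 2) + 1 ≤ p j ∧ p j ≤ 4 ^ (j - 1)) ∧
      ∀ i, i < n → (S.getD i false = true ↔ ∃ j, 1 ≤ j ∧ p j = i + 1) }

/-- A chain SLP generating any list of length ≥ 2. -/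
def chainSLP (S : List Bool) (h : 2 ≤ S.length) : SLP Bool where
  num := S.length - 1
  rhs i := (if _ : i.val = 0 then Sum.inr (S.getD 0 false)
            else Sum.inl ⟨i.val - 1, by omega⟩,
            Sum.inr (S.getD (i.val + 1) false))
  start := Sum.inl ⟨S.length - 2, by omega⟩
  wf i j := by
    constructor
    · intro hj
      by_cases h0 : i.val = 0 <;> simp [h0] at hj
      cases hj
      simp [Fin.lt_def]
      omega
    · intro hj
      by_cases h0 : i.val = 0 <;> simp [h0] at hj
lemma SLP.expand_eq {α : Type} (G : SLP α) (i : Fin G.num) :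
    G.expand i = G.expandSym (G.rhs i).1 ++ G.expandSym (G.rhs i).2 := by
  rw [SLP.expand]
  rcases h1 : (G.rhs i).1 with j | a <;> rcases h2 : (G.rhs i).2 with j' | a' <;>
    simp [SLP.expandSym]

lemma chainSLP_expand (S : List Bool) (h : 2 ≤ S.length) :
    ∀ k (i : Fin (chainSLP S h).num), i.val = k →
      (chainSLP S h).expand i = S.take (k + 2) := by
  intro k
  induction k with
  | zero =>
    intro i hi
    have hlt : i.val < S.length - 1 := i.isLt
    rw [SLP.expand_eq]
    have hr1 : ((chainSLP S h).rhs i).1 = Sum.inr (S.getD 0 false) := by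
      simp [chainSLP, hi]
    have hr2 : ((chainSLP S h).rhs i).2 = Sum.inr (S.getD 1 false) := by
      simp [chainSLP, hi]
    rw [hr1, hr2]
    simp [SLP.expandSym]
    have h0 : S[0]? = some (S.getD 0 false) := by
      rw [List.getElem?_eq_getElem (by omega), List.getD_eq_getElem _ _ (by omega)]
    have h1 : S[1]? = some (S.getD 1 false) := by
      rw [List.getElem?_eq_getElem (by omega), List.getD_eq_getElem _ _ (by omega)]
    rw [show (2:ℕ) = 0 + 1 + 1 by rfl, List.take_succ, List.take_succ, h0, h1]
    simp
  | succ k ih =>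
    intro i hi
    have hlt : i.val < S.length - 1 := i.isLt
    rw [SLP.expand_eq]
    have hr1 : ((chainSLP S h).rhs i).1 = Sum.inl ⟨k, by omega⟩ := by
      simp [chainSLP, hi]
    have hr2 : ((chainSLP S h).rhs i).2 = Sum.inr (S.getD (k + 2) false) := by
      simp [chainSLP, hi]
    rw [hr1, hr2]
    show (chainSLP S h).expand _ ++ _ = _
    rw [ih ⟨k, by omega⟩ rfl]
    have h2 : S[k+2]? = some (S.getD (k+2) false) := by
      rw [List.getElem?_eq_getElem (by omega), List.getD_eq_getElem _ _ (by omega)]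
    have h3 : S.take (k+2+1) = S.take (k+2) ++ [S.getD (k+2) false] := by
      rw [List.take_succ, h2]; rfl
    rw [show k+1+2 = (k+2)+1 from rfl, h3]
    simp [SLP.expandSym]

lemma chainSLP_generates (S : List Bool) (h : 2 ≤ S.length) :
    (chainSLP S h).Generates S := by
  show (chainSLP S h).expand ⟨S.length - 2, by simp [chainSLP]; omega⟩ = S
  rw [chainSLP_expand S h (S.length - 2) _ rfl]
  rw [show S.length - 2 + 2 = S.length by omega, List.take_length]

lemma exists_gen (S : List Bool) (h : 2 ≤ S.length) :
    ∃ G : SLP Bool, G.Generates S := ⟨chainSLP S h, chainSLP_generates S h⟩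

lemma slp_set_nonempty (S : List Bool) (h : 2 ≤ S.length) :
    { m | ∃ G : SLP Bool, G.Generates S ∧ G.size = m }.Nonempty :=
  ⟨(chainSLP S h).size, chainSLP S h, chainSLP_generates S h, rfl⟩
/-! ### The family of strings -/

abbrev famChoice (K : ℕ) := (j : Fin K) → Fin (2 * 4 ^ (j : ℕ))

def cval (K : ℕ) (c : famChoice K) (j : ℕ) : ℕ :=
  if h : j < K then (c ⟨j, h⟩).val else 0

lemma cval_lt (K : ℕ) (c : famChoice K) (j : ℕ) : cval K c j < 2 * 4 ^ j := by
  unfold cval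
  split
  · exact (c ⟨j, _⟩).isLt
  · positivity

def famStr (n K : ℕ) (c : famChoice K) : List Bool :=
  List.ofFn (fun i : Fin n =>
    decide (i.val = 0 ∨ ∃ j : Fin (K+1), i.val = 2 * 4 ^ (j : ℕ) + cval K c (j : ℕ)))

lemma famStr_length (n K : ℕ) (c : famChoice K) : (famStr n K c).length = n := by
  simp [famStr]

lemma famStr_getD (n K : ℕ) (c : famChoice K) (i : ℕ) (h : i < n) :
    ((famStr n K c).getD i false = true) ↔
      (i = 0 ∨ ∃ j ≤ K, i = 2 * 4 ^ j + cval K c j) := by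
  rw [List.getD_eq_getElem _ _ (by simpa [famStr_length] using h)]
  simp only [famStr, List.getElem_ofFn, decide_eq_true_eq]
  apply or_congr Iff.rfl
  constructor
  · rintro ⟨j, hj⟩
    exact ⟨(j : ℕ), by omega, hj⟩
  · rintro ⟨j, hjK, hj⟩
    exact ⟨⟨j, by omega⟩, hj⟩

/-- the level is determined by the position -/
lemma level_unique {j j' x : ℕ} (h1 : 2 * 4 ^ j ≤ x) (h2 : x < 4 ^ (j+1))
    (h1' : 2 * 4 ^ j' ≤ x) (h2' : x < 4 ^ (j'+1)) : j = j' := by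
  by_contra hne
  rcases Nat.lt_or_ge j j' with hlt | hge
  · have : 4 ^ (j+1) ≤ 4 ^ j' := Nat.pow_le_pow_right (by norm_num) hlt
    have : 4 ^ j' ≤ 2 * 4 ^ j' := by omega
    omega
  · have hlt : j' < j := by omega
    have : 4 ^ (j'+1) ≤ 4 ^ j := Nat.pow_le_pow_right (by norm_num) hlt
    have : 4 ^ j ≤ 2 * 4 ^ j := by omega
    omega

lemma famStr_injective (n K : ℕ) (hK : 4 ^ K ≤ n) :
    Function.Injective (famStr n K) := by
  intro c c' heq
  funext j
  have hjn : 2 * 4 ^ (j : ℕ) + (c j).val < n := by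
    have h1 : (c j).val < 2 * 4 ^ (j : ℕ) := (c j).isLt
    have h2 : 4 * 4 ^ (j : ℕ) ≤ 4 ^ K := by
      rw [show 4 * 4 ^ (j : ℕ) = 4 ^ ((j : ℕ) + 1) from (pow_succ' 4 _).symm]
      exact Nat.pow_le_pow_right (by norm_num) j.isLt
    omega
  set x := 2 * 4 ^ (j : ℕ) + (c j).val with hx
  have hcx : cval K c (j : ℕ) = (c j).val := by simp [cval, j.isLt]
  have htrue : ((famStr n K c).getD x false = true) := by
    rw [famStr_getD n K c x hjn]
    right
    exact ⟨(j : ℕ), by omega, by rw [hcx]⟩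
  rw [heq, famStr_getD n K c' x hjn] at htrue
  rcases htrue with h0 | ⟨j', hj', hxj'⟩
  · have : 0 < 4 ^ (j : ℕ) := by positivity
    omega
  · have hb := cval_lt K c' j'
    have hj'j : j' = (j : ℕ) := by
      apply level_unique (x := x) (by omega) (by rw [pow_succ]; omega)
        (by omega) (by rw [pow_succ]; omega)
    subst hj'j
    have : cval K c' (j : ℕ) = (c' j).val := by simp [cval, j.isLt]
    rw [this] at hxj'
    exact Fin.ext (by omega)
lemma famStr_mem (n K : ℕ) (h1 : 4 ^ K ≤ n) (h2 : n < 4 ^ (K+1)) (c : famChoice K) :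
    famStr n K c ∈ SPfamily n := by
  refine ⟨famStr_length n K c,
    fun j => if j = 1 then 1 else 2 * 4 ^ (j-2) + 1 + cval K c (j-2), by simp, ?_, ?_⟩
  · intro j hj
    have hne : j ≠ 1 := by omega
    simp only [hne, if_false]
    have hb := cval_lt K c (j-2)
    refine ⟨by omega, ?_⟩
    rw [show j-1 = (j-2)+1 by omega, pow_succ]
    omega
  · intro i hin
    rw [famStr_getD n K c i hin]
    constructor
    · rintro (rfl | ⟨j, hjK, rfl⟩)
      · exact ⟨1, le_refl 1, by simp⟩
      · refine ⟨j+2, by omega, ?_⟩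
        have hne : j+2 ≠ 1 := by omega
        simp only [hne, if_false, Nat.add_sub_cancel]
        omega
    · rintro ⟨j, hj1, hpj⟩
      rcases eq_or_ne j 1 with rfl | hne
      · simp at hpj
        left; omega
      · have hj2 : 2 ≤ j := by omega
        simp only [hne, if_false] at hpj
        have hjK : j - 2 ≤ K := by
          by_contra hcon
          have hK1 : K+1 ≤ j-2 := by omega
          have : 4^(K+1) ≤ 4^(j-2) := Nat.pow_le_pow_right (by norm_num) hK1
          omega
        right; exact ⟨j-2, hjK, by omega⟩

lemma famChoice_card (K : ℕ) : Fintype.card (famChoice K) = 2 ^ (K * K) := by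
  rw [Fintype.card_pi]
  simp only [Fintype.card_fin]
  rw [Finset.prod_mul_distrib, Finset.prod_const, Finset.card_univ, Fintype.card_fin]
  rw [Finset.prod_pow_eq_pow_sum]
  have hexp : (4 : ℕ) ^ (∑ j : Fin K, (j : ℕ)) = 2 ^ (K * (K-1)) := by
    rw [show (4:ℕ) = 2^2 from rfl, ← pow_mul]
    congr 1
    have h2 : (∑ j : Fin K, (j : ℕ)) * 2 = K * (K-1) := by
      rw [Fin.sum_univ_eq_sum_range (fun i => i) K, Finset.sum_range_id_mul_two]
    omega
  rw [hexp, ← pow_add]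
  congr 1
  cases K with
  | zero => rfl
  | succ k => simp [Nat.succ_sub_one]; ring
/-! ### Encoding SLPs -/

def symCode {m : ℕ} (num : ℕ) : (Fin m ⊕ Bool) → ℕ
  | Sum.inl j => j.val
  | Sum.inr false => num
  | Sum.inr true => num + 1

lemma symCode_lt {m num : ℕ} (h : m ≤ num) (x : Fin m ⊕ Bool) : symCode num x < num + 2 := by
  rcases x with j | b
  · have := j.isLt; simp [symCode]; omega
  · rcases b <;> simp [symCode]

lemma symCode_inj {m : ℕ} (x y : Fin m ⊕ Bool) (h : symCode m x = symCode m y) : x = y := by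
  rcases x with j | b <;> rcases y with j' | b'
  · simp [symCode] at h; exact congrArg Sum.inl (Fin.ext h)
  · exfalso; have := j.isLt; rcases b' <;> simp [symCode] at h <;> omega
  · exfalso; have := j'.isLt; rcases b <;> simp [symCode] at h <;> omega
  · rcases b <;> rcases b' <;> simp [symCode] at h ⊢

def gCode (G : SLP Bool) : ℕ → ℕ := fun k =>
  if k = 0 then G.num
  else if k = 1 then symCode G.num G.start
  else if h : (k - 2) / 2 < G.num then
    (if (k - 2) % 2 = 0 then symCode G.num ((G.rhs ⟨(k-2)/2, h⟩).1)
     else symCode G.num ((G.rhs ⟨(k-2)/2, h⟩).2))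
  else 0

lemma gCode_lt (G : SLP Bool) (k : ℕ) : gCode G k < G.num + 2 := by
  unfold gCode
  split
  · omega
  split
  · exact symCode_lt le_rfl _
  split
  · split <;> exact symCode_lt le_rfl _
  · omega

lemma gCode_eq_zero (G : SLP Bool) (k : ℕ) (h : 2 + 2 * G.num ≤ k) : gCode G k = 0 := by
  unfold gCode
  rw [if_neg (by omega), if_neg (by omega), dif_neg (by omega)]

lemma gCode_inj {G₁ G₂ : SLP Bool} (h : gCode G₁ = gCode G₂) : G₁ = G₂ := by
  have hnum : G₁.num = G₂.num := by
    have := congrFun h 0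
    simpa [gCode] using this
  rcases G₁ with ⟨n₁, r₁, s₁, w₁⟩
  rcases G₂ with ⟨n₂, r₂, s₂, w₂⟩
  simp only at hnum
  subst hnum
  have hstart : s₁ = s₂ := by
    have := congrFun h 1
    simp only [gCode, if_neg (by norm_num : (1:ℕ) ≠ 0), if_pos rfl] at this
    exact symCode_inj _ _ this
  have hrhs : r₁ = r₂ := by
    funext i
    have hi := i.isLt
    have e1 := congrFun h (2 + 2 * i.val)
    have e2 := congrFun h (3 + 2 * i.val)
    have hd1 : (2 + 2 * i.val - 2) / 2 = i.val := by omega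
    have hm1 : (2 + 2 * i.val - 2) % 2 = 0 := by omega
    have hd2 : (3 + 2 * i.val - 2) / 2 = i.val := by omega
    have hm2 : (3 + 2 * i.val - 2) % 2 = 1 := by omega
    simp only [gCode, if_neg (by omega : ¬(2 + 2 * i.val = 0)),
      if_neg (by omega : ¬(2 + 2 * i.val = 1)), if_neg (by omega : ¬(3 + 2 * i.val = 0)),
      if_neg (by omega : ¬(3 + 2 * i.val = 1)), hd1, hm1, hd2, hm2,
      dif_pos hi, if_pos rfl, if_neg (by omega : ¬(1:ℕ) = 0)] at e1 e2
    have p1 : (r₁ i).1 = (r₂ i).1 := by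
      have := symCode_inj _ _ e1
      simpa [Fin.eta] using this
    have p2 : (r₁ i).2 = (r₂ i).2 := by
      have := symCode_inj _ _ e2
      simpa [Fin.eta] using this
    exact Prod.ext p1 p2
  subst hstart
  subst hrhs
  rfl
lemma slp_spec (S : List Bool) (h : 2 ≤ S.length) :
    ∃ G : SLP Bool, G.Generates S ∧ G.size = slp S :=
  Nat.sInf_mem (slp_set_nonempty S h)

lemma slp_pos (S : List Bool) (h : 2 ≤ S.length) : 1 ≤ slp S := by
  obtain ⟨G, _, hsz⟩ := slp_spec S h
  rw [← hsz]
  unfold SLP.size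
  rcases Nat.eq_zero_or_pos G.num with h0 | h1
  · rcases hs : G.start with j | b
    · exact absurd j.isLt (by omega)
    · have : b ∈ G.terminals := by
        unfold SLP.terminals
        apply Finset.mem_union_right
        rw [hs]
        simp [symTerms]
      have := Finset.card_pos.mpr ⟨b, this⟩
      omega
  · omega

lemma pigeonhole (n K t : ℕ) (hn : 2 ≤ n) (h1 : 4 ^ K ≤ n)
    (hall : ∀ c : famChoice K, slp (famStr n K c) ≤ t) :
    2 ^ (K * K) ≤ (t + 2) ^ (2 * t + 3) := by
  have hgen : ∀ c : famChoice K, ∃ G : SLP Bool,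
      G.Generates (famStr n K c) ∧ G.size ≤ t := by
    intro c
    obtain ⟨G, hG, hsz⟩ := slp_spec (famStr n K c) (by rw [famStr_length]; exact hn)
    exact ⟨G, hG, hsz ▸ hall c⟩
  choose Gf hGen hSize using hgen
  have hnum : ∀ c, (Gf c).num ≤ t := fun c => le_trans (Nat.le_add_right _ _) (hSize c)
  set Φ : famChoice K → (Fin (2*t+3) → Fin (t+2)) := fun c k =>
    ⟨gCode (Gf c) k.val, lt_of_lt_of_le (gCode_lt _ _) (by have := hnum c; omega)⟩ with hΦ
  have hinj : Function.Injective Φ := by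
    intro c c' heq
    have hcode : gCode (Gf c) = gCode (Gf c') := by
      funext k
      by_cases hk : k < 2*t+3
      · have := congrFun heq ⟨k, hk⟩
        simpa [hΦ, Fin.ext_iff] using this
      · rw [gCode_eq_zero _ _ (by have := hnum c; omega),
          gCode_eq_zero _ _ (by have := hnum c'; omega)]
    have hGG : Gf c = Gf c' := gCode_inj hcode
    have : famStr n K c = famStr n K c' := by
      rw [← hGen c, ← hGen c', hGG]
    exact famStr_injective n K h1 this
  have hcard := Fintype.card_le_of_injective Φ hinj
  rwa [famChoice_card, Fintype.card_fun, Fintype.card_fin, Fintype.card_fin] at hcard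
lemma sq_add_two_lt_two_pow (K : ℕ) (hK : 5 ≤ K) : K * K + 2 < 2 ^ K := by
  induction K, hK using Nat.le_induction with
  | base => norm_num
  | succ K hK ih =>
    have h2 : 2 ^ (K+1) = 2 * 2 ^ K := by ring
    have : 2 ≤ K := by omega
    nlinarith

lemma count_lt (K : ℕ) (hK : 12 ≤ K) :
    (K*K/(4*(Nat.log 2 (K*K+2)+2)) + 2) ^ (2*(K*K/(4*(Nat.log 2 (K*K+2)+2))) + 3)
      < 2 ^ (K*K) := by
  set ℓ := Nat.log 2 (K*K+2) with hℓ
  set E := K*K with hE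
  set D := 4*(ℓ+2) with hD
  set t := E / D with ht
  have hEK : 12 * K ≤ E := by
    rw [hE]; exact Nat.mul_le_mul_right K hK
  have hE1 : 1 ≤ E := by omega
  have hlK : ℓ + 1 ≤ K := by
    have := sq_add_two_lt_two_pow K (by omega)
    have hlt : ℓ < K := Nat.log_lt_of_lt_pow (by omega) this
    omega
  have hdiv : 4 * (t * ℓ) + 8 * t ≤ E := by
    have h1 : t * D ≤ E := Nat.div_mul_le_self E D
    have h2 : t * D = 4 * (t * ℓ) + 8 * t := by rw [hD]; ring
    omega
  have hexp : (ℓ+1) * (2*t+3) < E := by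
    have hexpand : (ℓ+1) * (2*t+3) = 2*(t*ℓ) + 2*t + 3*ℓ + 3 := by ring
    omega
  have hlog' : Nat.log 2 (t+2) ≤ ℓ := by
    have h1 : t ≤ E := Nat.div_le_self E D
    exact le_trans (Nat.log_mono_right (by omega)) le_rfl
  have hb : t + 2 ≤ 2 ^ (ℓ+1) := by
    have := Nat.lt_pow_succ_log_self (by norm_num : 1 < 2) (t+2)
    have h2 : 2 ^ (Nat.log 2 (t+2) + 1) ≤ 2 ^ (ℓ+1) :=
      Nat.pow_le_pow_right (by norm_num) (by omega)
    omega
  calc (t+2) ^ (2*t+3) ≤ (2^(ℓ+1)) ^ (2*t+3) := Nat.pow_le_pow_left hb _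
    _ = 2 ^ ((ℓ+1)*(2*t+3)) := by rw [← pow_mul]
    _ < 2 ^ E := Nat.pow_lt_pow_right (by norm_num) hexp
/-- There is a constant `c > 0` such that for every `n ≥ 4` some string `S ∈ 𝒮^p_n`
satisfies `slp(S) ≥ c·(log₂ n)² / log₂ log₂ n`. -/
theorem exists_SPfamily_slp_lower_bound : ∃ c : ℝ, 0 < c ∧
    ∀ n : ℕ, 4 ≤ n → ∃ S ∈ SPfamily n,
      c * (Real.logb 2 (n : ℝ)) ^ 2 / Real.logb 2 (Real.logb 2 (n : ℝ)) ≤ (slp S : ℝ) := by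
  have hlogb2 : Real.logb 2 2 = 1 := Real.logb_self_eq_one (by norm_num)
  have hlogb4 : Real.logb 2 4 = 2 := by
    rw [show (4:ℝ) = 2^(2:ℕ) by norm_num, Real.logb_pow, hlogb2]
    norm_num
  refine ⟨1/1000, by norm_num, ?_⟩
  intro n hn
  set K := Nat.log 4 n with hKdef
  have hn0 : n ≠ 0 := by omega
  have h4K : 4 ^ K ≤ n := Nat.pow_log_le_self 4 hn0
  have h4K1 : n < 4 ^ (K+1) := Nat.lt_pow_succ_log_self (by norm_num) n
  have hK1 : 1 ≤ K := Nat.le_log_of_pow_le (by norm_num) (by simpa using hn)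
  set x := Real.logb 2 (n:ℝ) with hxdef
  have hnR : (4:ℝ) ≤ (n:ℝ) := by exact_mod_cast hn
  have hx2 : 2 ≤ x := by
    calc (2:ℝ) = Real.logb 2 4 := hlogb4.symm
      _ ≤ x := Real.logb_le_logb_of_le one_lt_two (by norm_num) hnR
  have hx0 : (0:ℝ) ≤ x := by linarith
  by_cases hKc : K < 12
  · -- small case
    set c0 : famChoice K := fun j => (⟨0, by positivity⟩ : Fin (2 * 4 ^ (j:ℕ)))
    refine ⟨famStr n K c0, famStr_mem n K h4K h4K1 c0, ?_⟩
    have hslp : 1 ≤ slp (famStr n K c0) :=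
      slp_pos _ (by rw [famStr_length]; omega)
    have hslpR : (1:ℝ) ≤ (slp (famStr n K c0) : ℝ) := by exact_mod_cast hslp
    have hxU : x ≤ 24 := by
      have hn24 : (n:ℝ) ≤ (2:ℝ)^(24:ℕ) := by
        have h1 : n < 4^12 := lt_of_lt_of_le h4K1 (Nat.pow_le_pow_right (by norm_num) (by omega))
        have h1' : n ≤ 16777216 := by norm_num at h1; omega
        rw [show ((2:ℝ))^(24:ℕ) = 16777216 by norm_num]
        exact_mod_cast h1'
      calc x ≤ Real.logb 2 ((2:ℝ)^(24:ℕ)) :=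
            Real.logb_le_logb_of_le one_lt_two (by linarith) hn24
        _ = 24 := by rw [Real.logb_pow, hlogb2]; norm_num
    have hd1 : 1 ≤ Real.logb 2 x := by
      rw [← hlogb2]
      exact Real.logb_le_logb_of_le one_lt_two (by norm_num) hx2
    have hd0 : (0:ℝ) < Real.logb 2 x := by linarith
    rw [div_le_iff₀ hd0]
    nlinarith [mul_le_mul hslpR hd1 (by norm_num) (le_of_lt (by positivity : (0:ℝ) < (slp (famStr n K c0) : ℝ)))]
  · -- large case
    push_neg at hKc
    set ℓ := Nat.log 2 (K*K+2) with hℓdef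
    set t := K*K/(4*(ℓ+2)) with htdef
    have hex : ∃ c : famChoice K, t + 1 ≤ slp (famStr n K c) := by
      by_contra hcon
      push_neg at hcon
      have hall : ∀ c, slp (famStr n K c) ≤ t := fun c => by have := hcon c; omega
      have hp := pigeonhole n K t (by omega) h4K hall
      have hcnt := count_lt K hKc
      rw [← hℓdef, ← htdef] at hcnt
      omega
    obtain ⟨c, hc⟩ := hex
    clear_value ℓ t
    refine ⟨famStr n K c, famStr_mem n K h4K h4K1 c, ?_⟩
    have hKR : (12:ℝ) ≤ (K:ℝ) := by exact_mod_cast hKc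
    have hx2K : 2*(K:ℝ) ≤ x := by
      have h1 : ((4:ℝ))^(K:ℕ) ≤ (n:ℝ) := by exact_mod_cast h4K
      have h2 : Real.logb 2 ((4:ℝ)^(K:ℕ)) ≤ x :=
        Real.logb_le_logb_of_le one_lt_two (by positivity) h1
      rwa [Real.logb_pow, hlogb4, mul_comm] at h2
    have hxU : x ≤ 2*(K:ℝ) + 2 := by
      have h1 : (n:ℝ) ≤ ((4:ℝ))^(K+1 : ℕ) := by exact_mod_cast h4K1.le
      have h2 : x ≤ Real.logb 2 ((4:ℝ)^(K+1:ℕ)) :=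
        Real.logb_le_logb_of_le one_lt_two (by linarith) h1
      rw [Real.logb_pow, hlogb4] at h2
      push_cast at h2
      linarith
    have hlogK0 : 0 ≤ Real.logb 2 (K:ℝ) := Real.logb_nonneg one_lt_two (by exact_mod_cast hK1)
    set d := Real.logb 2 x with hddef
    have hd1 : 1 + Real.logb 2 (K:ℝ) ≤ d := by
      have h1 : Real.logb 2 (2*(K:ℝ)) ≤ d :=
        Real.logb_le_logb_of_le one_lt_two (by linarith) hx2K
      rwa [Real.logb_mul (by norm_num) (by positivity), hlogb2] at h1
    have hd0 : (0:ℝ) < d := by linarith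
    have hℓR : (ℓ:ℝ) ≤ 1 + 2 * Real.logb 2 (K:ℝ) := by
      have h1 : (ℓ:ℝ) ≤ Real.logb 2 ((K*K+2 : ℕ) : ℝ) := by
        rw [hℓdef]
        exact_mod_cast Real.natLog_le_logb (K*K+2) 2
      have h2 : ((K*K+2 : ℕ) : ℝ) ≤ 2 * (K:ℝ)^2 := by
        push_cast
        nlinarith
      have h3 : Real.logb 2 ((K*K+2 : ℕ) : ℝ) ≤ Real.logb 2 (2 * (K:ℝ)^2) :=
        Real.logb_le_logb_of_le one_lt_two (by positivity) h2
      rw [Real.logb_mul (by norm_num) (by positivity), hlogb2, Real.logb_pow] at h3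
      push_cast at h1 h3
      linarith
    have hℓ2 : 4*((ℓ:ℝ) + 2) ≤ 12 * d := by linarith
    have htD : (K:ℝ)*(K:ℝ) < ((t:ℝ)+1) * (4*((ℓ:ℝ)+2)) := by
      have hD0 : 0 < 4*(ℓ+2) := by omega
      have h1 : K*K < (4*(ℓ+2)) * t + (4*(ℓ+2)) := by
        rw [htdef]
        calc K*K = (4*(ℓ+2)) * (K*K/(4*(ℓ+2))) + K*K%(4*(ℓ+2)) := (Nat.div_add_mod _ _).symm
          _ < (4*(ℓ+2)) * (K*K/(4*(ℓ+2))) + (4*(ℓ+2)) :=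
              Nat.add_lt_add_left (Nat.mod_lt _ hD0) _
      have h4 : K*K < (t+1) * (4*(ℓ+2)) := by
        calc K*K < (4*(ℓ+2)) * t + (4*(ℓ+2)) := h1
          _ = (t+1) * (4*(ℓ+2)) := by ring
      exact_mod_cast h4
    have key : (K:ℝ)*(K:ℝ) ≤ ((t:ℝ)+1) * (12*d) := by
      have ht0 : (0:ℝ) ≤ (t:ℝ)+1 := by positivity
      nlinarith
    have hslpR : ((t:ℝ)+1) ≤ (slp (famStr n K c) : ℝ) := by exact_mod_cast hc
    rw [div_le_iff₀ hd0]
    have hfin : ((t:ℝ)+1) * d ≤ (slp (famStr n K c) : ℝ) * d :=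
      mul_le_mul_of_nonneg_right hslpR hd0.le
    nlinarith
end

section
/- Let S = L·R be the concatenation of two nonempty strings L and R such that the set of characters occurring in L is disjoint from the set of characters occurring in R. Then slp(S) ≥ slp(L) + slp(R). -/
/-!
Take a smallest SLP `G` for `LR` and project it onto the alphabet of `L`: erase the letters of `R`
from every rule and contract the rules that lost a side. This yields an SLP for `L` whose
nonterminals are those nonterminals of `G` (deriving a factor of `LR`) both of whose children
derive a letter of `L`; likewise for `R`. No nonterminal deriving a factor of `LR` is counted
twice: both children deriving letters of both alphabets would put a letter of `R` in front of a
letter of `L`. The terminals of the two projections are the disjoint alphabets of `L` and `R`.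
-/

namespace SLP

variable {α : Type}

theorem expand_eq_s11 (G : SLP α) (i : Fin G.num) :
    G.expand i = G.expandSym (G.rhs i).1 ++ G.expandSym (G.rhs i).2 := by
  rw [SLP.expand]
  split <;> split <;> simp_all [expandSym]

def symRank {n : ℕ} : Fin n ⊕ α → ℕ := Sum.elim (fun i => i.val + 1) fun _ => 0

theorem symRank_rhs_le (G : SLP α) (i : Fin G.num) :
    symRank (G.rhs i).1 ≤ i ∧ symRank (G.rhs i).2 ≤ i := by
  constructor
  · rcases h : (G.rhs i).1 with j | a
    · exact (G.wf i j).1 h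
    · simp [symRank]
  · rcases h : (G.rhs i).2 with j | a
    · exact (G.wf i j).2 h
    · simp [symRank]

@[elab_as_elim]
theorem sym_induction (G : SLP α) {P : Fin G.num ⊕ α → Prop} (inr : ∀ a, P (.inr a))
    (inl : ∀ i, P (G.rhs i).1 → P (G.rhs i).2 → P (.inl i)) (s : Fin G.num ⊕ α) : P s := by
  induction h : symRank s using Nat.strong_induction_on generalizing s with
  | _ n ih =>
    rcases s with i | a
    · have := G.symRank_rhs_le i
      simp only [symRank, Sum.elim_inl] at h
      exact inl i (ih _ (by omega) _ rfl) (ih _ (by omega) _ rfl)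
    · exact inr a

theorem symTerms_rhs_subset_terminals [DecidableEq α] (G : SLP α) (i : Fin G.num) :
    symTerms (G.rhs i).1 ∪ symTerms (G.rhs i).2 ⊆ G.terminals :=
  (Finset.subset_biUnion_of_mem (fun i => symTerms (G.rhs i).1 ∪ symTerms (G.rhs i).2)
    (Finset.mem_univ i)).trans Finset.subset_union_left

theorem mem_terminals_of_mem_expandSym [DecidableEq α] (G : SLP α) {s : Fin G.num ⊕ α}
    (hs : symTerms s ⊆ G.terminals) {a : α} (ha : a ∈ G.expandSym s) : a ∈ G.terminals := by
  induction s using G.sym_induction with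
  | inr b =>
    rw [expandSym, List.mem_singleton] at ha
    exact hs (by simp [symTerms, ha])
  | inl i ih₁ ih₂ =>
    have hrule := G.symTerms_rhs_subset_terminals i
    rw [expandSym, expand_eq_s11, List.mem_append] at ha
    exact ha.elim (ih₁ (Finset.union_subset_left hrule)) (ih₂ (Finset.union_subset_right hrule))

theorem Generates.toFinset_subset [DecidableEq α] {G : SLP α} {S : List α}
    (hG : G.Generates S) : S.toFinset ⊆ G.terminals := fun _ ha =>
  G.mem_terminals_of_mem_expandSym Finset.subset_union_right (hG ▸ List.mem_toFinset.mp ha)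

def single (a : α) : SLP α := ⟨0, Fin.elim0, .inr a, fun i => i.elim0⟩

theorem generates_single (a : α) : (single a).Generates [a] := rfl

def liftSym {n : ℕ} : Fin n ⊕ α → Fin (n + 1) ⊕ α := Sum.map Fin.castSucc id

theorem liftSym_eq_inl {n : ℕ} {s : Fin n ⊕ α} {j : Fin (n + 1)} (h : liftSym s = .inl j) :
    ∃ k, s = .inl k ∧ j = k.castSucc := by
  rcases s with k | b
  · exact ⟨k, rfl, (Sum.inl.inj h).symm⟩
  · cases h

def prepend (a : α) (G : SLP α) : SLP α where
  num := G.num + 1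
  rhs := Fin.lastCases (.inr a, liftSym G.start) fun i =>
    (liftSym (G.rhs i).1, liftSym (G.rhs i).2)
  start := .inl (Fin.last G.num)
  wf i j := by
    induction i using Fin.lastCases with
    | last =>
      refine ⟨by simp, fun h => ?_⟩
      obtain ⟨k, -, rfl⟩ := liftSym_eq_inl (by simpa using h)
      exact Fin.castSucc_lt_last k
    | cast i =>
      simp only [Fin.lastCases_castSucc]
      refine ⟨fun h => ?_, fun h => ?_⟩ <;> obtain ⟨k, hk, rfl⟩ := liftSym_eq_inl h
      · exact Fin.castSucc_lt_castSucc_iff.mpr ((G.wf i k).1 hk)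
      · exact Fin.castSucc_lt_castSucc_iff.mpr ((G.wf i k).2 hk)

theorem expandSym_prepend_liftSym (a : α) (G : SLP α) (s : Fin G.num ⊕ α) :
    (G.prepend a).expandSym (liftSym s) = G.expandSym s := by
  induction s using G.sym_induction with
  | inr b => rfl
  | inl i ih₁ ih₂ =>
    have hrhs : (G.prepend a).rhs i.castSucc = (liftSym (G.rhs i).1, liftSym (G.rhs i).2) :=
      Fin.lastCases_castSucc (motive := fun _ => _ × _) ..
    change (G.prepend a).expand i.castSucc = G.expand i
    rw [expand_eq_s11 (G.prepend a) i.castSucc, expand_eq_s11, hrhs, ih₁, ih₂]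

theorem Generates.prepend {G : SLP α} {w : List α} (hG : G.Generates w) (a : α) :
    (G.prepend a).Generates (a :: w) := by
  have hrhs : (G.prepend a).rhs (Fin.last G.num) = (.inr a, liftSym G.start) :=
    Fin.lastCases_last (motive := fun _ => _ × _) ..
  change (G.prepend a).expand (Fin.last G.num) = a :: w
  rw [expand_eq_s11 (G.prepend a) (Fin.last G.num), hrhs, expandSym_prepend_liftSym, hG]
  rfl

theorem exists_generates {w : List α} (hw : w ≠ []) : ∃ G : SLP α, G.Generates w := by
  induction w with
  | nil => exact absurd rfl hw
  | cons a w ih =>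
    rcases eq_or_ne w [] with rfl | hw'
    · exact ⟨single a, generates_single a⟩
    · obtain ⟨G, hG⟩ := ih hw'
      exact ⟨G.prepend a, hG.prepend a⟩

theorem slp_le_size [DecidableEq α] {G : SLP α} {S : List α} (hG : G.Generates S) :
    slp S ≤ G.size :=
  Nat.sInf_le ⟨G, hG, rfl⟩

theorem exists_generates_size_eq_slp [DecidableEq α] {S : List α} (hS : S ≠ []) :
    ∃ G : SLP α, G.Generates S ∧ G.size = slp S :=
  Nat.sInf_mem (s := {m | ∃ G : SLP α, G.Generates S ∧ G.size = m})
    (let ⟨G, hG⟩ := exists_generates hS; ⟨G.size, G, hG, rfl⟩)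

def Meets (G : SLP α) (C : Finset α) (s : Fin G.num ⊕ α) : Prop :=
  ∃ a ∈ G.expandSym s, a ∈ C

theorem meets_inl_iff (G : SLP α) (C : Finset α) (i : Fin G.num) :
    G.Meets C (.inl i) ↔ G.Meets C (G.rhs i).1 ∨ G.Meets C (G.rhs i).2 := by
  simp only [Meets]
  rw [expandSym, expand_eq_s11]
  simp only [List.mem_append, or_and_right, exists_or]

section Projection

variable [DecidableEq α] (G : SLP α) (C : Finset α) (S : List α)

instance (s : Fin G.num ⊕ α) : Decidable (G.Meets C s) :=
  inferInstanceAs (Decidable (∃ a ∈ _, _))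

def projNonterminals : Finset (Fin G.num) :=
  {i | G.expand i <:+: S ∧ G.Meets C (G.rhs i).1 ∧ G.Meets C (G.rhs i).2}

noncomputable def projIndex : Fin (G.projNonterminals C S).card ≃o G.projNonterminals C S :=
  (G.projNonterminals C S).orderIsoOfFin rfl

/-- A nonterminal outside `projNonterminals` derives `C`-letters through at most one child
(when it derives a factor of `S`), so it is replaced by the image of that child. -/
noncomputable def projSym : Fin G.num ⊕ α → Fin (G.projNonterminals C S).card ⊕ α
  | .inr a => .inr a
  | .inl i =>
    if h : i ∈ G.projNonterminals C S then .inl ((G.projIndex C S).symm ⟨i, h⟩)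
    else if G.Meets C (G.rhs i).1 then projSym (G.rhs i).1 else projSym (G.rhs i).2
termination_by s => symRank s
decreasing_by
  all_goals have := G.symRank_rhs_le i; simp only [symRank, Sum.elim_inl] at *; omega

theorem projIndex_lt_of_projSym_eq_inl (s : Fin G.num ⊕ α)
    {t : Fin (G.projNonterminals C S).card} (h : G.projSym C S s = .inl t) :
    ((G.projIndex C S t).1 : ℕ) < symRank s := by
  induction s using G.sym_induction with
  | inr a => simp [projSym] at h
  | inl i ih₁ ih₂ =>
    have := G.symRank_rhs_le i
    rw [projSym] at h
    simp only [symRank, Sum.elim_inl]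
    split_ifs at h with hi h₁
    · simp [← Sum.inl.inj h]
    · have := ih₁ h; omega
    · have := ih₂ h; omega

noncomputable def projection : SLP α where
  num := (G.projNonterminals C S).card
  rhs t := (G.projSym C S (G.rhs (G.projIndex C S t)).1,
    G.projSym C S (G.rhs (G.projIndex C S t)).2)
  start := G.projSym C S G.start
  wf t t' := by
    have := G.symRank_rhs_le (G.projIndex C S t)
    refine ⟨fun h => ?_, fun h => ?_⟩ <;>
      have := G.projIndex_lt_of_projSym_eq_inl C S _ h <;>
      exact (G.projIndex C S).lt_iff_lt.mp (by rw [Subtype.mk_lt_mk, Fin.lt_def]; omega)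

theorem filter_expandSym_eq_nil {s : Fin G.num ⊕ α} (h : ¬ G.Meets C s) :
    (G.expandSym s).filter (· ∈ C) = [] :=
  List.filter_eq_nil_iff.mpr fun a ha haC => h ⟨a, ha, by simpa using haC⟩

theorem expandSym_projSym (s : Fin G.num ⊕ α) (hS : G.expandSym s <:+: S) (hC : G.Meets C s) :
    (G.projection C S).expandSym (G.projSym C S s) = (G.expandSym s).filter (· ∈ C) := by
  induction s using G.sym_induction with
  | inr a =>
    obtain ⟨b, hb, hbC⟩ := hC
    obtain rfl : b = a := List.mem_singleton.mp hb
    simp [projSym, expandSym, hbC]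
  | inl i ih₁ ih₂ =>
    change G.expand i <:+: S at hS
    have hS₁ := (List.prefix_append _ _).isInfix.trans (G.expand_eq_s11 i ▸ hS)
    have hS₂ := (List.suffix_append _ _).isInfix.trans (G.expand_eq_s11 i ▸ hS)
    rw [expandSym, expand_eq_s11, List.filter_append, projSym]
    split_ifs with hi h₁
    · obtain ⟨-, -, h₁, h₂⟩ := Finset.mem_filter.mp hi
      change (G.projection C S).expand _ = _
      rw [expand_eq_s11 (G.projection C S) ((G.projIndex C S).symm ⟨i, hi⟩), ← ih₁ hS₁ h₁,
        ← ih₂ hS₂ h₂]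
      simp [projection]
    · have h₂ : ¬ G.Meets C (G.rhs i).2 := fun h₂ =>
        hi (Finset.mem_filter.mpr ⟨Finset.mem_univ i, hS, h₁, h₂⟩)
      rw [ih₁ hS₁ h₁, G.filter_expandSym_eq_nil C h₂, List.append_nil]
    · have h₂ := ((G.meets_inl_iff C i).mp hC).resolve_left h₁
      rw [ih₂ hS₂ h₂, G.filter_expandSym_eq_nil C h₁, List.nil_append]

theorem symTerms_projSym_subset (s : Fin G.num ⊕ α) (hC : G.Meets C s) :
    symTerms (G.projSym C S s) ⊆ C := by
  induction s using G.sym_induction with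
  | inr a =>
    obtain ⟨b, hb, hbC⟩ := hC
    obtain rfl : b = a := List.mem_singleton.mp hb
    simpa [projSym, symTerms] using hbC
  | inl i ih₁ ih₂ =>
    rw [projSym]
    split_ifs with hi h₁
    · simp [symTerms]
    · exact ih₁ h₁
    · exact ih₂ (((G.meets_inl_iff C i).mp hC).resolve_left h₁)

theorem terminals_projection_subset (hC : G.Meets C G.start) :
    (G.projection C S).terminals ⊆ C := by
  refine Finset.union_subset (Finset.biUnion_subset.mpr fun t _ => ?_)
    (G.symTerms_projSym_subset C S _ hC)
  obtain ⟨-, -, h₁, h₂⟩ := Finset.mem_filter.mp (G.projIndex C S t).2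
  exact Finset.union_subset (G.symTerms_projSym_subset C S _ h₁)
    (G.symTerms_projSym_subset C S _ h₂)

variable {G C S}

theorem Generates.meets_start (hG : G.Generates S) (hC : S.filter (· ∈ C) ≠ []) :
    G.Meets C G.start := by
  obtain ⟨a, ha⟩ := List.exists_mem_of_ne_nil _ hC
  rw [List.mem_filter, decide_eq_true_iff] at ha
  exact ⟨a, hG ▸ ha.1, ha.2⟩

theorem Generates.projection (hG : G.Generates S) (hC : S.filter (· ∈ C) ≠ []) :
    (G.projection C S).Generates (S.filter (· ∈ C)) := by
  have := G.expandSym_projSym C S G.start (by rw [hG]) (hG.meets_start hC)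
  rwa [hG] at this

theorem slp_filter_le (hG : G.Generates S) (hC : S.filter (· ∈ C) ≠ []) :
    slp (S.filter (· ∈ C)) ≤ (G.projNonterminals C S).card + C.card :=
  (slp_le_size (hG.projection hC)).trans <| Nat.add_le_add_left
    (Finset.card_le_card (G.terminals_projection_subset C S (hG.meets_start hC))) _

end Projection

end SLP

section DisjointAlphabets

variable {α : Type} {L R : List α}

theorem notMem_right_of_infix_append (hdisj : ∀ a ∈ L, a ∉ R) {u v : List α}
    (huv : u ++ v <:+: L ++ R) {a b : α} (ha : a ∈ v) (haL : a ∈ L) (hb : b ∈ u) :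
    b ∉ R := by
  obtain ⟨p, q, h⟩ := huv
  rw [List.append_assoc, List.append_assoc, ← List.append_assoc p u] at h
  rcases List.append_eq_append_iff.mp h with ⟨w, hL, -⟩ | ⟨w, -, hR⟩
  · exact hdisj b (by rw [hL]; simp [hb])
  · exact fun _ => hdisj a haL (by rw [hR]; simp [ha])

variable [DecidableEq α]

theorem filter_append_mem_toFinset_left (hdisj : ∀ a ∈ L, a ∉ R) :
    (L ++ R).filter (· ∈ L.toFinset) = L := by
  rw [List.filter_append, List.filter_eq_self.mpr (by simp),
    List.filter_eq_nil_iff.mpr fun a ha haL => hdisj a (by simpa using haL) ha, List.append_nil]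

theorem filter_append_mem_toFinset_right (hdisj : ∀ a ∈ L, a ∉ R) :
    (L ++ R).filter (· ∈ R.toFinset) = R := by
  rw [List.filter_append,
    List.filter_eq_nil_iff.mpr fun a ha haR => hdisj a ha (by simpa using haR),
    List.filter_eq_self.mpr (by simp), List.nil_append]

theorem SLP.disjoint_projNonterminals (G : SLP α) (hdisj : ∀ a ∈ L, a ∉ R) :
    Disjoint (G.projNonterminals L.toFinset (L ++ R))
      (G.projNonterminals R.toFinset (L ++ R)) := by
  refine Finset.disjoint_left.mpr fun i hiL hiR => ?_
  obtain ⟨-, hS, -, a, ha, haL⟩ := Finset.mem_filter.mp hiL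
  obtain ⟨-, ⟨b, hb, hbR⟩, -⟩ := (Finset.mem_filter.mp hiR).2
  rw [expand_eq_s11] at hS
  exact notMem_right_of_infix_append hdisj hS ha (by simpa using haL) hb (by simpa using hbR)

end DisjointAlphabets

/-- If `S = L·R` where `L` and `R` are nonempty strings over disjoint sets of
characters, then `slp(S) ≥ slp(L) + slp(R)`. -/
theorem slp_append_ge {α : Type} [DecidableEq α] (L R : List α)
    (hL : L ≠ []) (hR : R ≠ []) (hdisj : ∀ a ∈ L, a ∉ R) :
    slp L + slp R ≤ slp (L ++ R) := by
  obtain ⟨G, hG, hsize⟩ := SLP.exists_generates_size_eq_slp (S := L ++ R) (by simp [hL])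
  have hfilterL := filter_append_mem_toFinset_left hdisj
  have hfilterR := filter_append_mem_toFinset_right hdisj
  have hslpL := hfilterL ▸ SLP.slp_filter_le hG (C := L.toFinset) (hfilterL ▸ hL)
  have hslpR := hfilterR ▸ SLP.slp_filter_le hG (C := R.toFinset) (hfilterR ▸ hR)
  have hnum : (G.projNonterminals L.toFinset (L ++ R)).card +
      (G.projNonterminals R.toFinset (L ++ R)).card ≤ G.num := by
    rw [← Finset.card_union_of_disjoint (G.disjoint_projNonterminals hdisj)]
    exact (Finset.card_le_univ _).trans_eq (Fintype.card_fin _)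
  have hterm : L.toFinset.card + R.toFinset.card ≤ G.terminals.card := by
    rw [← Finset.card_union_of_disjoint (List.disjoint_toFinset_iff_disjoint.mpr hdisj),
      ← List.toFinset_append]
    exact Finset.card_le_card hG.toFinset_subset
  rw [← hsize, SLP.size]
  omega
end

section
/- Let S be a string of length n, let ℓ ≥ 1 be an integer, and for i = 1,...,⌊n/ℓ⌋ let B_i = S[(i−1)ℓ+1 .. iℓ] be the i-th length-ℓ block of S. Call B_i marked if either i ≥ 2 and the occurrence of B_{i−1}·B_i starting at position (i−2)ℓ+1 is the leftmost occurrence of the string B_{i−1}·B_i in S, or i < ⌊n/ℓ⌋ and the occurrence of B_i·B_{i+1} starting at position (i−1)ℓ+1 is the leftmost occurrence of the string B_i·B_{i+1} in S. Then the number of marked blocks is at most 4·δ(S) + 4. -/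
/-- The string `T` occurs in `S` starting at the (0-based) position `p`. -/
def occursAt {α : Type} (S T : List α) (p : ℕ) : Prop :=
  p + T.length ≤ S.length ∧ (S.drop p).take T.length = T

/-- The occurrence of `T` in `S` starting at the (0-based) position `p` is leftmost:
`T` occurs at `p` and at no smaller position. -/
def IsLeftmostOcc {α : Type} (S T : List α) (p : ℕ) : Prop :=
  occursAt S T p ∧ ∀ q < p, ¬ occursAt S T q

/-- The `i`-th (1-based) length-`ℓ` block `B_i = S[(i−1)ℓ+1 .. iℓ]` of `S`. -/
def blockOf {α : Type} (S : List α) (ℓ i : ℕ) : List α :=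
  (S.drop ((i - 1) * ℓ)).take ℓ

/-- Block `B_i` is marked: either `i ≥ 2` and the occurrence of `B_{i−1}·B_i` starting
at (1-based) position `(i−2)ℓ+1` is the leftmost occurrence of `B_{i−1}·B_i` in `S`,
or `i < ⌊n/ℓ⌋` and the occurrence of `B_i·B_{i+1}` starting at (1-based) position
`(i−1)ℓ+1` is the leftmost occurrence of `B_i·B_{i+1}` in `S`. -/
def MarkedBlock {α : Type} (S : List α) (ℓ i : ℕ) : Prop :=
  (2 ≤ i ∧ IsLeftmostOcc S (blockOf S ℓ (i - 1) ++ blockOf S ℓ i) ((i - 2) * ℓ)) ∨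
  (i < S.length / ℓ ∧ IsLeftmostOcc S (blockOf S ℓ i ++ blockOf S ℓ (i + 1)) ((i - 1) * ℓ))


/-!
A marked block `B_i` with `3 ≤ i ≤ ⌊n/ℓ⌋ - 2` comes with a leftmost occurrence of a block pair
at `(i-2)ℓ` or `(i-1)ℓ`. Each of the `ℓ` windows of length `4ℓ - 1` starting at
`(i-3)ℓ+1, …, (i-2)ℓ` contains it, hence is itself a leftmost occurrence. Leftmost occurrences
at distinct positions are distinct strings, so these blocks number at most
`d_{4ℓ-1}(S) / ℓ ≤ δ(S) (4ℓ - 1) / ℓ < 4 δ(S)`; the remaining blocks are among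
`B_1, B_2, B_{⌊n/ℓ⌋-1}, B_{⌊n/ℓ⌋}`.
-/

section Occurrences

variable {α : Type}

theorem length_take_drop_of_add_le (S : List α) {p K : ℕ} (h : p + K ≤ S.length) :
    ((S.drop p).take K).length = K := by
  simp only [List.length_take, List.length_drop]
  omega

theorem occursAt_take_drop (S : List α) {p K : ℕ} (h : p + K ≤ S.length) :
    occursAt S ((S.drop p).take K) p := by
  rw [occursAt, length_take_drop_of_add_le S h]
  exact ⟨h, rfl⟩

theorem IsLeftmostOcc.eq {S T : List α} {p q : ℕ}
    (hp : IsLeftmostOcc S T p) (hq : IsLeftmostOcc S T q) : p = q := by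
  rcases lt_trichotomy p q with h | h | h
  · exact absurd hp.1 (hq.2 p h)
  · exact h
  · exact absurd hq.1 (hp.2 q h)

theorem IsLeftmostOcc.take_drop_of_le {S T : List α} {p q K : ℕ} (hT : IsLeftmostOcc S T p)
    (hqp : q ≤ p) (hpK : p + T.length ≤ q + K) (hK : q + K ≤ S.length) :
    IsLeftmostOcc S ((S.drop q).take K) q := by
  refine ⟨occursAt_take_drop S hK, fun q' hq' ⟨hlen, hwin⟩ => ?_⟩
  rw [length_take_drop_of_add_le S hK] at hlen hwin
  have hshift := congrArg (fun w : List α => (w.drop (p - q)).take T.length) hwin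
  simp only [List.drop_take, List.drop_drop, List.take_take] at hshift
  rw [min_eq_left (by omega), Nat.add_sub_cancel' hqp] at hshift
  exact hT.2 (q' + (p - q)) (by omega) ⟨by omega, hshift.trans hT.1.2⟩

end Occurrences

section SubstringComplexity

variable {α : Type} [DecidableEq α]

theorem take_drop_mem_substrings (S : List α) {p K : ℕ} (h : p + K ≤ S.length) :
    (S.drop p).take K ∈ substrings S K :=
  Finset.mem_filter.mpr
    ⟨Finset.mem_image.mpr ⟨p, Finset.mem_range.mpr (by omega), rfl⟩,
      length_take_drop_of_add_le S h⟩

theorem card_le_subCount_of_isLeftmostOcc {ι : Type*} (S : List α) {s : Finset ι} {K : ℕ}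
    {pos : ι → ℕ} (hpos : Set.InjOn pos s) (hfit : ∀ x ∈ s, pos x + K ≤ S.length)
    (hleft : ∀ x ∈ s, IsLeftmostOcc S ((S.drop (pos x)).take K) (pos x)) :
    s.card ≤ subCount S K := by
  refine Finset.card_le_card_of_injOn (fun x => (S.drop (pos x)).take K)
    (fun x hx => take_drop_mem_substrings S (hfit x hx)) (fun x hx y hy hxy => hpos hx hy ?_)
  have hy' := hleft y hy
  simp only at hxy
  rw [← hxy] at hy'
  exact (hleft x hx).eq hy'

theorem delta_nonneg (S : List α) : 0 ≤ delta S := by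
  unfold delta
  split_ifs with h
  · exact le_rfl
  · exact le_trans (by positivity) (Finset.le_sup' (fun k => (subCount S k : ℚ) / k)
      (Finset.mem_Icc.mpr ⟨le_rfl, List.length_pos_iff.mpr h⟩))

theorem subCount_le_delta_mul (S : List α) {k : ℕ} (hk : 1 ≤ k) (hkS : k ≤ S.length) :
    (subCount S k : ℚ) ≤ delta S * k := by
  have hS : S ≠ [] := List.ne_nil_of_length_pos (by omega)
  rw [← div_le_iff₀ (by exact_mod_cast hk), delta, dif_neg hS]
  exact Finset.le_sup' (fun k => (subCount S k : ℚ) / k) (Finset.mem_Icc.mpr ⟨hk, hkS⟩)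

end SubstringComplexity

section Blocks

variable {α : Type}

theorem MarkedBlock.exists_isLeftmostOcc {S : List α} {ℓ i : ℕ} (h : MarkedBlock S ℓ i) :
    ∃ T p, T.length ≤ 2 * ℓ ∧ (i - 2) * ℓ ≤ p ∧ p ≤ (i - 1) * ℓ ∧ IsLeftmostOcc S T p := by
  have hpair (j k : ℕ) : (blockOf S ℓ j ++ blockOf S ℓ k).length ≤ 2 * ℓ := by
    simp only [blockOf, List.length_append, List.length_take]
    omega
  rcases h with ⟨_, hL⟩ | ⟨_, hL⟩
  · exact ⟨_, _, hpair _ _, le_rfl, Nat.mul_le_mul_right ℓ (by omega), hL⟩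
  · exact ⟨_, _, hpair _ _, Nat.mul_le_mul_right ℓ (by omega), le_rfl, hL⟩

theorem MarkedBlock.isLeftmostOcc_window {S : List α} {ℓ i b : ℕ} (h : MarkedBlock S ℓ i)
    (hi : 3 ≤ i) (hiS : (i + 2) * ℓ ≤ S.length) (hb : b < ℓ) :
    IsLeftmostOcc S ((S.drop ((i - 3) * ℓ + 1 + b)).take (4 * ℓ - 1)) ((i - 3) * ℓ + 1 + b) ∧
      (i - 3) * ℓ + 1 + b + (4 * ℓ - 1) ≤ S.length := by
  obtain ⟨T, p, hT, hp₁, hp₂, hL⟩ := h.exists_isLeftmostOcc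
  obtain ⟨j, rfl⟩ : ∃ j, i = j + 3 := ⟨i - 3, by omega⟩
  simp only [show j + 3 - 3 = j by omega, show j + 3 - 2 = j + 1 by omega,
    show j + 3 - 1 = j + 2 by omega, add_mul, one_mul] at hp₁ hp₂ hiS ⊢
  have hfit : j * ℓ + 1 + b + (4 * ℓ - 1) ≤ S.length := by omega
  exact ⟨hL.take_drop_of_le (by omega) (by omega) hfit, hfit⟩

theorem mul_add_injOn_univ_prod_Iio (ℓ : ℕ) :
    Set.InjOn (fun x : ℕ × ℕ => x.1 * ℓ + x.2) (Set.univ ×ˢ Set.Iio ℓ) := by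
  rintro ⟨x, b⟩ ⟨-, hb⟩ ⟨y, b'⟩ ⟨-, hb'⟩ h
  simp only [Set.mem_Iio] at hb hb' h
  have hℓ : 0 < ℓ := lt_of_le_of_lt (Nat.zero_le b) hb
  have hxb : (x * ℓ + b) / ℓ = x ∧ (x * ℓ + b) % ℓ = b := (Nat.div_mod_unique hℓ).mpr ⟨by ring, hb⟩
  have hyb : (y * ℓ + b') / ℓ = y ∧ (y * ℓ + b') % ℓ = b' :=
    (Nat.div_mod_unique hℓ).mpr ⟨by ring, hb'⟩
  rw [h] at hxb
  exact Prod.ext (hxb.1.symm.trans hyb.1) (hxb.2.symm.trans hyb.2)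

open Classical in
theorem card_filter_markedBlock_Icc_mul_le [DecidableEq α] (S : List α) (ℓ : ℕ) :
    ((Finset.Icc 3 (S.length / ℓ - 2)).filter (MarkedBlock S ℓ)).card * ℓ ≤
      subCount S (4 * ℓ - 1) := by
  set G := (Finset.Icc 3 (S.length / ℓ - 2)).filter (MarkedBlock S ℓ)
  have hwin : ∀ x ∈ G ×ˢ Finset.range ℓ,
      IsLeftmostOcc S ((S.drop ((x.1 - 3) * ℓ + 1 + x.2)).take (4 * ℓ - 1))
        ((x.1 - 3) * ℓ + 1 + x.2) ∧ (x.1 - 3) * ℓ + 1 + x.2 + (4 * ℓ - 1) ≤ S.length := by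
    rintro ⟨i, b⟩ hx
    simp only [G, Finset.mem_product, Finset.mem_filter, Finset.mem_Icc, Finset.mem_range] at hx
    obtain ⟨⟨⟨hi₁, hi₂⟩, hM⟩, hb⟩ := hx
    exact hM.isLeftmostOcc_window hi₁ (Nat.mul_le_of_le_div ℓ _ _ (by omega)) hb
  have hinj : Set.InjOn (fun x : ℕ × ℕ => (x.1 - 3) * ℓ + 1 + x.2) ↑(G ×ˢ Finset.range ℓ) := by
    rintro ⟨i, b⟩ hx ⟨i', b'⟩ hx' h
    simp only [G, Finset.coe_product, Set.mem_prod, Finset.coe_filter, Finset.mem_Icc,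
      Finset.coe_range, Set.mem_Iio] at hx hx' h
    have := mul_add_injOn_univ_prod_Iio ℓ
      (show (i - 3, b) ∈ Set.univ ×ˢ Set.Iio ℓ from ⟨trivial, hx.2⟩)
      (show (i' - 3, b') ∈ Set.univ ×ˢ Set.Iio ℓ from ⟨trivial, hx'.2⟩) (by simp only; omega)
    simp only [Prod.mk.injEq] at this
    have hi : 3 ≤ i := hx.1.1.1
    have hi' : 3 ≤ i' := hx'.1.1.1
    ext <;> simp only <;> omega
  have hcount := card_le_subCount_of_isLeftmostOcc S hinj (fun x hx => (hwin x hx).2)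
    (fun x hx => (hwin x hx).1)
  rwa [Finset.card_product, Finset.card_range] at hcount

open Classical in
theorem card_filter_markedBlock_Icc_le [DecidableEq α] (S : List α) (ℓ : ℕ) :
    ((((Finset.Icc 3 (S.length / ℓ - 2)).filter (MarkedBlock S ℓ)).card : ℚ)) ≤
      4 * delta S := by
  set G := (Finset.Icc 3 (S.length / ℓ - 2)).filter (MarkedBlock S ℓ)
  have hδ := delta_nonneg S
  rcases Finset.eq_empty_or_nonempty G with hG | ⟨i, hi⟩
  · simpa [hG] using hδ
  obtain ⟨hi₁, hi₂⟩ := Finset.mem_Icc.mp (Finset.mem_filter.mp hi).1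
  have hℓ : 0 < ℓ := Nat.pos_of_ne_zero fun h => by simp [h] at hi₂; omega
  have h5ℓ : 5 * ℓ ≤ S.length := Nat.mul_le_of_le_div ℓ _ _ (by omega)
  have hle : (G.card : ℚ) * ℓ ≤ 4 * delta S * ℓ :=
    calc (G.card : ℚ) * ℓ ≤ subCount S (4 * ℓ - 1) := by
          exact_mod_cast card_filter_markedBlock_Icc_mul_le S ℓ
      _ ≤ delta S * ((4 * ℓ - 1 : ℕ) : ℚ) := subCount_le_delta_mul S (by omega) (by omega)
      _ ≤ 4 * delta S * ℓ := by
        rw [Nat.cast_sub (by omega)]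
        push_cast
        nlinarith
  exact le_of_mul_le_mul_right hle (by exact_mod_cast hℓ)

end Blocks

theorem card_Icc_sdiff_Icc_le_four (N : ℕ) : (Finset.Icc 1 N \ Finset.Icc 3 (N - 2)).card ≤ 4 := by
  refine le_trans (Finset.card_le_card fun i hi => ?_) (Finset.card_le_four (a := 1) (b := 2)
    (c := N - 1) (d := N))
  simp only [Finset.mem_sdiff, Finset.mem_Icc] at hi
  simp only [Finset.mem_insert, Finset.mem_singleton]
  omega

theorem marked_blocks_le_general {α : Type} [DecidableEq α] (S : List α) (ℓ : ℕ) :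
    (({i : ℕ | 1 ≤ i ∧ i ≤ S.length / ℓ ∧ MarkedBlock S ℓ i}.ncard : ℚ)) ≤
      4 * delta S + 4 := by
  classical
  set N := S.length / ℓ
  have hset : {i : ℕ | 1 ≤ i ∧ i ≤ N ∧ MarkedBlock S ℓ i} =
      ↑((Finset.Icc 1 N).filter (MarkedBlock S ℓ)) := by
    ext i
    simp [and_assoc]
  have hsplit : (Finset.Icc 1 N).filter (MarkedBlock S ℓ) ⊆
      (Finset.Icc 3 (N - 2)).filter (MarkedBlock S ℓ) ∪ (Finset.Icc 1 N \ Finset.Icc 3 (N - 2)) := by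
    intro i hi
    obtain ⟨hiN, hM⟩ := Finset.mem_filter.mp hi
    by_cases hint : i ∈ Finset.Icc 3 (N - 2)
    · exact Finset.mem_union_left _ (Finset.mem_filter.mpr ⟨hint, hM⟩)
    · exact Finset.mem_union_right _ (Finset.mem_sdiff.mpr ⟨hiN, hint⟩)
  have hcard := (Finset.card_le_card hsplit).trans (Finset.card_union_le _ _)
  have hinterior := card_filter_markedBlock_Icc_le S ℓ
  have hends : ((Finset.Icc 1 N \ Finset.Icc 3 (N - 2)).card : ℚ) ≤ 4 := by
    exact_mod_cast card_Icc_sdiff_Icc_le_four N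
  rw [hset, Set.ncard_coe_finset]
  calc _ ≤ (((Finset.Icc 3 (N - 2)).filter (MarkedBlock S ℓ)).card : ℚ) +
        (Finset.Icc 1 N \ Finset.Icc 3 (N - 2)).card := by exact_mod_cast hcard
    _ ≤ 4 * delta S + 4 := add_le_add hinterior hends

/-- For every string `S` of length `n` and block length `ℓ ≥ 1`, the number of marked
blocks among `B_1, ..., B_{⌊n/ℓ⌋}` is at most `4·δ(S) + 4`. -/
theorem marked_blocks_le {α : Type} [DecidableEq α] (S : List α) (ℓ : ℕ) (hℓ : 1 ≤ ℓ) :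
    (({i : ℕ | 1 ≤ i ∧ i ≤ S.length / ℓ ∧ MarkedBlock S ℓ i}.ncard : ℚ)) ≤
      4 * delta S + 4 :=
  marked_blocks_le_general S ℓ
end

section
/- Let S₁, ..., S_m be strings (m ≥ 1) and let $₁, ..., $_{m−1} be pairwise distinct symbols not occurring in any S_i. Let S = S₁ $₁ S₂ $₂ ⋯ $_{m−1} S_m. Then for every k ≥ 1, d_k(S) ≤ (m−1)·k + Σ_{i=1}^{m} d_k(S_i). -/
/-- `joinSep [S₁, ..., S_m] [c₁, ..., c_{m−1}] = S₁ c₁ S₂ c₂ ⋯ c_{m−1} S_m`: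
concatenation of the strings interleaved with the separator symbols. -/
def joinSep {α : Type} : List (List α) → List α → List α
  | [], _ => []
  | [T], _ => T
  | T :: Ts, [] => T ++ joinSep Ts []
  | T :: Ts, c :: cs => T ++ c :: joinSep Ts cs

/-! A length-`k` window of `T ++ U ++ R` lies inside `T`, lies inside `R`, or starts at one of
the `|U| + k - 1` positions from which it reaches past `T` without starting past `U`. Splitting
`S₁ $₁ ⋯ $_{m−1} S_m` as `S₁ ++ [$₁] ++ (S₂ $₂ ⋯ S_m)` therefore costs at most `k` extra
substrings per separator. -/

lemma joinSep_cons_cons {α : Type} (T T' : List α) (Ts : List (List α)) (seps : List α) :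
    joinSep (T :: T' :: Ts) seps = T ++ seps.head?.toList ++ joinSep (T' :: Ts) seps.tail := by
  cases seps <;> simp [joinSep]

section Substrings

variable {α : Type} [DecidableEq α]

lemma mem_substrings_iff {S w : List α} {k : ℕ} :
    w ∈ substrings S k ↔ (∃ i, (S.drop i).take k = w) ∧ w.length = k := by
  simp only [substrings, Finset.mem_filter, Finset.mem_image, Finset.mem_range]
  refine ⟨fun ⟨⟨i, _, hi⟩, hw⟩ => ⟨⟨i, hi⟩, hw⟩, fun ⟨⟨i, hi⟩, hw⟩ => ⟨⟨min i S.length, ?_, ?_⟩, hw⟩⟩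
  · omega
  · rcases le_total i S.length with h | h
    · rwa [min_eq_left h]
    · rwa [min_eq_right h, List.drop_length, ← List.drop_eq_nil_of_le h]

lemma substrings_append_append_subset (T U R : List α) (k : ℕ) :
    substrings (T ++ U ++ R) k ⊆ substrings T k ∪
      ((Finset.Ico (T.length + 1 - k) (T.length + U.length)).image
        fun i => ((T ++ U ++ R).drop i).take k) ∪ substrings R k := by
  intro w hw
  obtain ⟨⟨i, rfl⟩, hk⟩ := mem_substrings_iff.mp hw
  simp only [Finset.mem_union, Finset.mem_image, Finset.mem_Ico]
  by_cases hT : i + k ≤ T.length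
  · refine .inl (.inl (mem_substrings_iff.mpr ⟨⟨i, ?_⟩, hk⟩))
    rw [List.append_assoc, List.drop_append_of_le_length (by omega),
      List.take_append_of_le_length (by simp; omega)]
  by_cases hR : T.length + U.length ≤ i
  · refine .inr (mem_substrings_iff.mpr ⟨⟨i - (T ++ U).length, ?_⟩, hk⟩)
    have hdrop : (T ++ U ++ R).drop i = R.drop (i - (T ++ U).length) := by
      rw [List.drop_append, List.drop_eq_nil_of_le (by simp; omega), List.nil_append]
    rw [hdrop]
  · exact .inl (.inr ⟨i, ⟨by omega, by omega⟩, rfl⟩)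

theorem subCount_append_append_le (T U R : List α) (k : ℕ) :
    subCount (T ++ U ++ R) k ≤ subCount T k + (U.length + k - 1) + subCount R k := by
  refine (Finset.card_le_card (substrings_append_append_subset T U R k)).trans ?_
  refine (Finset.card_union_le _ _).trans (Nat.add_le_add_right ?_ _)
  refine (Finset.card_union_le _ _).trans (Nat.add_le_add_left ?_ _)
  refine Finset.card_image_le.trans ?_
  simp only [Nat.card_Ico]
  omega

theorem subCount_joinSep_cons_le (T : List α) (Ts : List (List α)) (seps : List α) (k : ℕ) :
    subCount (joinSep (T :: Ts) seps) k ≤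
      Ts.length * k + ((T :: Ts).map fun U => subCount U k).sum := by
  induction Ts generalizing T seps with
  | nil => simp [joinSep]
  | cons T' Ts ih =>
    have hsep : seps.head?.toList.length ≤ 1 := by cases seps <;> simp
    calc subCount (joinSep (T :: T' :: Ts) seps) k
        ≤ subCount T k + (seps.head?.toList.length + k - 1) +
            subCount (joinSep (T' :: Ts) seps.tail) k := by
          rw [joinSep_cons_cons]
          exact subCount_append_append_le _ _ _ k
      _ ≤ subCount T k + k + (Ts.length * k + ((T' :: Ts).map fun U => subCount U k).sum) := by
          gcongr
          · omega
          · exact ih T' seps.tail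
      _ = (T' :: Ts).length * k + ((T :: T' :: Ts).map fun U => subCount U k).sum := by
          simp only [List.length_cons, List.map_cons, List.sum_cons]
          ring

end Substrings

theorem subCount_joinSep_le_general {α : Type} [DecidableEq α]
    (Ss : List (List α)) (seps : List α)
    (hm : 1 ≤ Ss.length)
    (k : ℕ) :
    subCount (joinSep Ss seps) k ≤
      (Ss.length - 1) * k + (Ss.map (fun T => subCount T k)).sum := by
  obtain ⟨T, Ts, rfl⟩ := List.exists_cons_of_length_pos hm
  simpa using subCount_joinSep_cons_le T Ts seps k

/-- If `S = S₁ $₁ S₂ $₂ ⋯ $_{m−1} S_m` where the separators `$₁, ..., $_{m−1}` are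
pairwise distinct symbols occurring in no `S_i`, then for every `k ≥ 1`,
`d_k(S) ≤ (m−1)·k + Σᵢ d_k(Sᵢ)`. -/
theorem subCount_joinSep_le {α : Type} [DecidableEq α]
    (Ss : List (List α)) (seps : List α)
    (hm : 1 ≤ Ss.length) (hlen : seps.length + 1 = Ss.length)
    (hnd : seps.Nodup) (hsep : ∀ c ∈ seps, ∀ T ∈ Ss, c ∉ T)
    (k : ℕ) (hk : 1 ≤ k) :
    subCount (joinSep Ss seps) k ≤
      (Ss.length - 1) * k + (Ss.map (fun T => subCount T k)).sum :=
  subCount_joinSep_le_general Ss seps hm k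
end
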